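/- Let g_1(t) = ((t+eps)^{gamma_1} - eps^{gamma_1}) / ((1+eps)^{gamma_1} - eps^{gamma_1}) and g_2(t) defined analogously with exponent gamma_2, where eps > 0 and 0 < gamma_1 < gamma_2. Then g_1(t) > g_2(t) for all t in (0,1). -/

import Mathlib

open Real Set

/-! Dividing by `eps ^ γ` turns the schedule into `(A ^ γ - 1) / (B ^ γ - 1)` with
`1 < A = (t + eps) / eps < B = (1 + eps) / eps`. Writing `A = B ^ θ` with
`θ = log_B A ∈ (0, 1)`, this is the secant slope `(y ^ θ - 1) / (y - 1)` of the strictly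
concave map `y ↦ y ^ θ` from the point `1`, taken at `y = B ^ γ`. Secant slopes of a strictly
concave map decrease, and `B ^ γ` increases with `γ`. -/

lemma strictAntiOn_rpow_sub_one_div_sub_one {θ : ℝ} (hθ0 : 0 < θ) (hθ1 : θ < 1) :
    StrictAntiOn (fun y : ℝ ↦ (y ^ θ - 1) / (y - 1)) (Ioi 1) := by
  intro y₁ hy₁ y₂ hy₂ hlt
  have hy₁' : (1 : ℝ) < y₁ := hy₁
  simpa using (strictConcaveOn_rpow hθ0 hθ1).secant_strict_mono (a := 1)
    (mem_Ici.2 zero_le_one) (mem_Ici.2 (by linarith)) (mem_Ici.2 (by linarith))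
    hy₁'.ne' (hy₁'.trans hlt).ne' hlt

lemma strictAntiOn_rpow_sub_one_div_rpow_sub_one {A B : ℝ} (hA : 1 < A) (hAB : A < B) :
    StrictAntiOn (fun γ : ℝ ↦ (A ^ γ - 1) / (B ^ γ - 1)) (Ioi 0) := by
  have hB : 1 < B := hA.trans hAB
  set θ := logb B A
  have hθ0 : 0 < θ := logb_pos hB hA
  have hθ1 : θ < 1 := by
    simpa [logb_self_eq_one hB] using logb_lt_logb hB (by linarith) hAB
  have hA_eq : ∀ γ : ℝ, A ^ γ = (B ^ γ) ^ θ := fun γ ↦ by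
    rw [← rpow_mul (by linarith), mul_comm, rpow_mul (by linarith),
      rpow_logb (by linarith) hB.ne' (by linarith)]
  simp_rw [hA_eq]
  exact (strictAntiOn_rpow_sub_one_div_sub_one hθ0 hθ1).comp_strictMonoOn
    (fun γ₁ _ γ₂ _ h ↦ (rpow_lt_rpow_left_iff hB).2 h) (fun γ hγ ↦ one_lt_rpow hB hγ)

lemma rpow_sub_rpow_div_rpow_sub_rpow_eq {e a b : ℝ} (he : 0 < e) (ha : 0 ≤ a) (hb : 0 ≤ b)
    (γ : ℝ) :
    (a ^ γ - e ^ γ) / (b ^ γ - e ^ γ) = ((a / e) ^ γ - 1) / ((b / e) ^ γ - 1) := by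
  have heγ : e ^ γ ≠ 0 := (rpow_pos_of_pos he γ).ne'
  rw [div_rpow ha he.le, div_rpow hb he.le, div_sub_one heγ, div_sub_one heγ,
    div_div_div_cancel_right₀ heγ]

lemma strictAntiOn_rpow_sub_rpow_div_rpow_sub_rpow {e a b : ℝ} (he : 0 < e) (hea : e < a)
    (hab : a < b) :
    StrictAntiOn (fun γ : ℝ ↦ (a ^ γ - e ^ γ) / (b ^ γ - e ^ γ)) (Ioi 0) := by
  simp_rw [rpow_sub_rpow_div_rpow_sub_rpow_eq he (he.trans hea).le (he.trans (hea.trans hab)).le]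
  exact strictAntiOn_rpow_sub_one_div_rpow_sub_one ((one_lt_div he).2 hea)
    (div_lt_div_of_pos_right hab he)

/-- Schedule comparison: the smoothed power schedule with the smaller exponent lies
strictly above the one with the larger exponent on `(0,1)`. -/
theorem smoothed_power_schedule_compare (eps gamma1 gamma2 : ℝ)
    (heps : 0 < eps) (h1 : 0 < gamma1) (h12 : gamma1 < gamma2)
    (g1 g2 : ℝ → ℝ)
    (hg1 : ∀ t, g1 t = ((t + eps) ^ gamma1 - eps ^ gamma1) /
      ((1 + eps) ^ gamma1 - eps ^ gamma1))
    (hg2 : ∀ t, g2 t = ((t + eps) ^ gamma2 - eps ^ gamma2) /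
      ((1 + eps) ^ gamma2 - eps ^ gamma2)) :
    ∀ t ∈ Set.Ioo (0 : ℝ) 1, g2 t < g1 t := by
  rintro t ⟨ht0, ht1⟩
  rw [hg1, hg2]
  exact strictAntiOn_rpow_sub_rpow_div_rpow_sub_rpow heps (by linarith) (by linarith)
    h1 (h1.trans h12) h12
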